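/- The second derivative with respect to θ of P_n^m(cos θ) satisfies ∂_θ² P_n^m(cos θ) = (1/sin² θ)·[ (n+1 + (n+1)² cos² θ) P_n^m(cos θ) − 2 cos θ (n−m+1)(n+2) P_{n+1}^m(cos θ) + (n−m+1)(n−m+2) P_{n+2}^m(cos θ) ] for θ ∈ (0, π). -/

import Mathlib

open Real

/-- Legendre polynomial via Rodrigues' formula. -/
noncomputable def legendreP (n : ℕ) (x : ℝ) : ℝ :=
  (1 / (2 ^ n * (Nat.factorial n : ℝ))) * iteratedDeriv n (fun y : ℝ => (y ^ 2 - 1) ^ n) x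

/-- Associated Legendre polynomial. -/
noncomputable def assocLegendreP (m n : ℕ) (x : ℝ) : ℝ :=
  (-1 : ℝ) ^ m * (1 - x ^ 2) ^ ((m : ℝ) / 2) * iteratedDeriv m (legendreP n) x

/-!
On `(0, π)` we have `sin θ > 0`, so `(1 - cos² θ)^(m/2) = sin^m θ` and
`P_n^m(cos θ) = (-1)^m sin^m θ · (D^m P_n)(cos θ)` with `P_n` a genuine polynomial.
Rodrigues' formula gives the classical identities `P_{n+1}' = x P_n' + (n+1) P_n` and
`(1 - x²) P_n' = (n+1)(x P_n - P_{n+1})`; differentiating them `m` times yields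
`(1 - x²) D^{m+1} P_n = (n+m+1) x D^m P_n - (n-m+1) D^m P_{n+1}`, which is the first-order
recurrence for `θ ↦ P_n^m(cos θ)`. Differentiating that recurrence once more and substituting it
for both `P_n^m` and `P_{n+1}^m` gives the second derivative, after using `sin² = 1 - cos²`.
-/

namespace Polynomial

variable {R : Type*} [CommRing R]

theorem iterate_derivative_succ_X_mul (k : ℕ) (p : R[X]) :
    derivative^[k + 1] (X * p) =
      X * derivative^[k + 1] p + ((k : R[X]) + 1) * derivative^[k] p := by
  rw [mul_comm, iterate_derivative_mul_X, nsmul_eq_mul, Nat.add_sub_cancel]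
  push_cast
  ring

theorem derivative_sq_sub_one : derivative (X ^ 2 - 1 : R[X]) = 2 * X := by
  rw [derivative_sub, derivative_X_sq, derivative_one, sub_zero, C_ofNat]

theorem iterate_derivative_succ_sq_sub_one_mul_derivative (k : ℕ) (q : R[X]) :
    derivative^[k + 1] ((X ^ 2 - 1) * derivative q) =
      (X ^ 2 - 1) * derivative^[k + 2] q + 2 * ((k : R[X]) + 1) * X * derivative^[k + 1] q
        + ((k : R[X]) + 1) * (k : R[X]) * derivative^[k] q := by
  induction k generalizing q with
  | zero =>
    simp only [zero_add, Function.iterate_succ_apply', Function.iterate_zero_apply, derivative_mul,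
      derivative_sq_sub_one, Nat.cast_zero]
    ring
  | succ k ih =>
    rw [Function.iterate_succ_apply', ih]
    simp only [derivative_add, derivative_mul, derivative_sq_sub_one, derivative_X,
      derivative_natCast, derivative_ofNat, derivative_one,
      ← Function.iterate_succ_apply' derivative]
    push_cast
    ring

theorem iteratedDeriv_eval {𝕜 : Type*} [NontriviallyNormedField 𝕜] (k : ℕ) (p : 𝕜[X]) :
    iteratedDeriv k (fun x => p.eval x) = fun x => (derivative^[k] p).eval x := by
  induction k generalizing p with
  | zero => simp
  | succ k ih =>
    have hderiv : deriv (fun x => p.eval x) = fun x => (derivative p).eval x := by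
      ext
      exact p.deriv
    rw [iteratedDeriv_succ', hderiv, ih, Function.iterate_succ_apply]

end Polynomial

namespace AssocLegendre

open Polynomial Topology

variable {R : Type*} [CommRing R]

noncomputable def rodriguesPoly (n : ℕ) : R[X] := (X ^ 2 - 1) ^ n

theorem derivative_rodriguesPoly_succ (n : ℕ) :
    derivative (rodriguesPoly (n + 1) : R[X]) =
      ((2 * (n + 1) : ℕ) : R[X]) * (X * rodriguesPoly n) := by
  rw [rodriguesPoly, derivative_pow, derivative_sq_sub_one, rodriguesPoly, C_eq_natCast]
  push_cast
  ring

theorem sq_sub_one_mul_derivative_rodriguesPoly (n : ℕ) :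
    (X ^ 2 - 1) * derivative (rodriguesPoly n : R[X]) =
      ((2 * n : ℕ) : R[X]) * (X * rodriguesPoly n) := by
  cases n with
  | zero => simp [rodriguesPoly]
  | succ n =>
    rw [derivative_rodriguesPoly_succ, rodriguesPoly, rodriguesPoly, pow_succ]
    push_cast
    ring

noncomputable def legendrePoly (n : ℕ) : ℝ[X] :=
  C (1 / (2 ^ n * (Nat.factorial n : ℝ))) * derivative^[n] (rodriguesPoly n)

theorem legendrePoly_succ (n : ℕ) :
    legendrePoly (n + 1) =
      C (1 / (2 ^ n * (Nat.factorial n : ℝ))) * derivative^[n] (X * rodriguesPoly n) := by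
  have hconst : 1 / (2 ^ (n + 1) * ((n + 1).factorial : ℝ)) * (2 * (n + 1)) =
      1 / (2 ^ n * (n.factorial : ℝ)) := by
    rw [Nat.factorial_succ]
    push_cast
    field_simp
    ring
  have hcoeff : ((2 * (n + 1) : ℕ) : ℝ[X]) = C (2 * ((n : ℝ) + 1)) := by
    rw [← C_eq_natCast]
    push_cast
    rfl
  rw [legendrePoly, Function.iterate_succ_apply, derivative_rodriguesPoly_succ, hcoeff,
    iterate_derivative_C_mul, ← mul_assoc, ← C_mul, hconst]

theorem legendrePoly_zero : legendrePoly 0 = 1 := by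
  simp [legendrePoly, rodriguesPoly]

theorem legendrePoly_one : legendrePoly 1 = X := by
  simp [legendrePoly_succ, rodriguesPoly]

theorem derivative_legendrePoly_succ (n : ℕ) :
    derivative (legendrePoly (n + 1)) =
      X * derivative (legendrePoly n) + ((n : ℝ[X]) + 1) * legendrePoly n := by
  rw [legendrePoly_succ, legendrePoly, derivative_C_mul, derivative_C_mul,
    ← Function.iterate_succ_apply' derivative, iterate_derivative_succ_X_mul,
    ← Function.iterate_succ_apply' derivative]
  ring

theorem one_sub_sq_mul_derivative_legendrePoly (n : ℕ) :
    (1 - X ^ 2) * derivative (legendrePoly n) =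
      ((n : ℝ[X]) + 1) * (X * legendrePoly n - legendrePoly (n + 1)) := by
  cases n with
  | zero =>
    simp [legendrePoly_zero, legendrePoly_one]
  | succ k =>
    have hode := congrArg (derivative^[k + 1])
      (sq_sub_one_mul_derivative_rodriguesPoly (R := ℝ) (k + 1))
    rw [iterate_derivative_succ_sq_sub_one_mul_derivative, iterate_derivative_natCast_mul] at hode
    have hX := iterate_derivative_succ_X_mul k (rodriguesPoly (R := ℝ) (k + 1))
    rw [legendrePoly_succ (k + 1), legendrePoly, derivative_C_mul,
      ← Function.iterate_succ_apply' derivative]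
    set c := C (1 / (2 ^ (k + 1) * ((k + 1).factorial : ℝ)))
    push_cast at hode ⊢
    linear_combination (-c) * hode + (-c * k) * hX

theorem iterate_derivative_legendrePoly_succ (m n : ℕ) :
    derivative^[m + 1] (legendrePoly (n + 1)) =
      X * derivative^[m + 1] (legendrePoly n)
        + ((n : ℝ[X]) + (m : ℝ[X]) + 1) * derivative^[m] (legendrePoly n) := by
  induction m with
  | zero => simpa using derivative_legendrePoly_succ n
  | succ m ih =>
    rw [Function.iterate_succ_apply', ih]
    simp only [derivative_add, derivative_mul, derivative_X, derivative_natCast, derivative_one,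
      ← Function.iterate_succ_apply' derivative]
    push_cast
    ring

theorem one_sub_sq_mul_iterate_derivative_legendrePoly (m n : ℕ) :
    (1 - X ^ 2) * derivative^[m + 1] (legendrePoly n) =
      ((n : ℝ[X]) + (m : ℝ[X]) + 1) * X * derivative^[m] (legendrePoly n)
        - ((n : ℝ[X]) - (m : ℝ[X]) + 1) * derivative^[m] (legendrePoly (n + 1)) := by
  induction m with
  | zero =>
    simp only [zero_add, Function.iterate_one, Function.iterate_zero_apply, Nat.cast_zero,
      one_sub_sq_mul_derivative_legendrePoly]
    ring
  | succ m ih =>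
    have hderiv := congrArg derivative ih
    simp only [derivative_mul, derivative_sub, derivative_add, derivative_X_sq, derivative_X,
      derivative_one, derivative_natCast, C_ofNat, ← Function.iterate_succ_apply' derivative]
      at hderiv
    rw [iterate_derivative_legendrePoly_succ] at hderiv ⊢
    push_cast
    linear_combination hderiv

theorem legendreP_eq_eval (n : ℕ) : legendreP n = fun x => (legendrePoly n).eval x := by
  have hrodrigues :
      (fun y : ℝ => (y ^ 2 - 1) ^ n) = fun y => (rodriguesPoly n : ℝ[X]).eval y := by
    simp [rodriguesPoly]
  funext x
  rw [legendreP, legendrePoly, eval_mul, eval_C, hrodrigues, iteratedDeriv_eval]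

theorem assocLegendreP_cos (m n : ℕ) {θ : ℝ} (hθ : 0 ≤ sin θ) :
    assocLegendreP m n (cos θ) =
      (-1) ^ m * sin θ ^ m * (derivative^[m] (legendrePoly n)).eval (cos θ) := by
  have hsin : (1 - cos θ ^ 2) ^ ((m : ℝ) / 2) = sin θ ^ m := by
    rw [← sin_sq, ← rpow_natCast, ← rpow_mul hθ, Nat.cast_two,
      mul_div_cancel₀ _ two_ne_zero, rpow_natCast]
  rw [assocLegendreP, legendreP_eq_eval, iteratedDeriv_eval, hsin]

theorem hasDerivAt_assocLegendreP_cos (m n : ℕ) {θ : ℝ} (hθ : θ ∈ Set.Ioo 0 π) :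
    HasDerivAt (fun t => assocLegendreP m n (cos t))
      (-1 / sin θ * (((n : ℝ) + 1) * cos θ * assocLegendreP m n (cos θ)
        - ((n : ℝ) - m + 1) * assocLegendreP m (n + 1) (cos θ))) θ := by
  have hsin : 0 < sin θ := sin_pos_of_pos_of_lt_pi hθ.1 hθ.2
  have hlocal : (fun t => assocLegendreP m n (cos t)) =ᶠ[𝓝 θ]
      fun t => (-1) ^ m * sin t ^ m * (derivative^[m] (legendrePoly n)).eval (cos t) :=
    Filter.eventually_of_mem (isOpen_Ioo.mem_nhds hθ) fun t ht =>
      assocLegendreP_cos m n (sin_pos_of_pos_of_lt_pi ht.1 ht.2).le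
  have hrec := congrArg (eval (cos θ)) (one_sub_sq_mul_iterate_derivative_legendrePoly m n)
  simp only [eval_mul, eval_sub, eval_add, eval_natCast, eval_X, eval_pow, eval_one,
    Function.iterate_succ_apply'] at hrec
  -- `m - 1` is truncated; for `m = 0` the factor `m` kills the term anyway.
  have hpow : (m : ℝ) * sin θ ^ (m - 1) * sin θ = m * sin θ ^ m := by
    rcases m with _ | k
    · simp
    · rw [Nat.add_sub_cancel, mul_assoc, ← pow_succ]
  have hprod := (((hasDerivAt_sin θ).pow m).const_mul ((-1 : ℝ) ^ m)).mul
    (((derivative^[m] (legendrePoly n)).hasDerivAt (cos θ)).comp θ (hasDerivAt_cos θ))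
  refine (hprod.congr_of_eventuallyEq hlocal).congr_deriv ?_
  rw [assocLegendreP_cos m n hsin.le, assocLegendreP_cos m (n + 1) hsin.le]
  simp only [Function.comp_apply, Pi.pow_apply]
  rw [div_mul_eq_mul_div, eq_div_iff hsin.ne']
  linear_combination (-1) ^ m * cos θ * (derivative^[m] (legendrePoly n)).eval (cos θ) * hpow
    - (-1) ^ m * sin θ ^ m * hrec
    - (-1) ^ m * sin θ ^ m * (derivative (derivative^[m] (legendrePoly n))).eval (cos θ)
      * sin_sq θ

end AssocLegendre

open AssocLegendre Topology in
theorem deriv2_assocLegendre_cos_general (n m : ℕ) (θ : ℝ) (hθ : θ ∈ Set.Ioo 0 π) :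
    deriv (deriv (fun t : ℝ => assocLegendreP m n (Real.cos t))) θ =
      (1 / Real.sin θ ^ 2) *
        ((((n : ℝ) + 1) + ((n : ℝ) + 1) ^ 2 * Real.cos θ ^ 2) * assocLegendreP m n (Real.cos θ)
          - 2 * Real.cos θ * ((n : ℝ) - (m : ℝ) + 1) * ((n : ℝ) + 2) *
              assocLegendreP m (n + 1) (Real.cos θ)
          + ((n : ℝ) - (m : ℝ) + 1) * ((n : ℝ) - (m : ℝ) + 2) *
              assocLegendreP m (n + 2) (Real.cos θ)) := by
  have hsin : sin θ ≠ 0 := (sin_pos_of_pos_of_lt_pi hθ.1 hθ.2).ne'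
  have hfirst : deriv (fun t => assocLegendreP m n (cos t)) =ᶠ[𝓝 θ] fun t =>
      -(sin t)⁻¹ * (((n : ℝ) + 1) * cos t * assocLegendreP m n (cos t)
        - ((n : ℝ) - m + 1) * assocLegendreP m (n + 1) (cos t)) :=
    Filter.eventually_of_mem (isOpen_Ioo.mem_nhds hθ) fun t ht =>
      (hasDerivAt_assocLegendreP_cos m n ht).deriv.trans (by ring)
  have hsecond := ((hasDerivAt_sin θ).inv hsin).neg.mul
    ((((hasDerivAt_cos θ).const_mul ((n : ℝ) + 1)).mul
      (hasDerivAt_assocLegendreP_cos m n hθ)).sub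
      ((hasDerivAt_assocLegendreP_cos m (n + 1) hθ).const_mul ((n : ℝ) - m + 1)))
  rw [hfirst.deriv_eq]
  refine hsecond.deriv.trans ?_
  simp only [Pi.mul_apply, Pi.sub_apply, Pi.neg_apply, Pi.inv_apply]
  push_cast
  field_simp
  linear_combination ((n : ℝ) + 1) * assocLegendreP m n (cos θ) * sin_sq θ

theorem deriv2_assocLegendre_cos (n m : ℕ) (hm : m ≤ n) (θ : ℝ) (hθ : θ ∈ Set.Ioo 0 π) :
    deriv (deriv (fun t : ℝ => assocLegendreP m n (Real.cos t))) θ =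
      (1 / Real.sin θ ^ 2) *
        ((((n : ℝ) + 1) + ((n : ℝ) + 1) ^ 2 * Real.cos θ ^ 2) * assocLegendreP m n (Real.cos θ)
          - 2 * Real.cos θ * ((n : ℝ) - (m : ℝ) + 1) * ((n : ℝ) + 2) *
              assocLegendreP m (n + 1) (Real.cos θ)
          + ((n : ℝ) - (m : ℝ) + 1) * ((n : ℝ) - (m : ℝ) + 2) *
              assocLegendreP m (n + 2) (Real.cos θ)) :=
  deriv2_assocLegendre_cos_general n m θ hθ
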